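/- arXiv:1203.4188 — 2 statements merged into one kernel-verified Lean document; each statement's English description precedes it below -/
import Mathlib

section
/- Let r ≥ 3, n ≥ 2r, and X = {3, j} with r + 2 ≤ j ≤ n. Let ℬ = {A ∈ [n]^(r) : |A ∩ {1,2,3}| ≥ 2}. Then |ℬ(X)| = C(n−2, r−2) + C(n−3, r−2) + C(n−4, r−3) > C(n−2, r−2) + C(n−3, r−2) = |𝒮(X)|, where 𝒮 is the star at 1. Hence {3, j} is not good. -/
open Finset

/-- The ij-compression of a finite set: replace j by i if possible. -/
def comp (i j : ℕ) (A : Finset ℕ) : Finset ℕ :=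
  if j ∈ A ∧ i ∉ A then insert i (A.erase j) else A

/-- The ij-compression of a family of sets. -/
def compFam (i j : ℕ) (𝒜 : Finset (Finset ℕ)) : Finset (Finset ℕ) :=
  (𝒜.filter (fun A => comp i j A ∈ 𝒜)) ∪
    ((𝒜.filter (fun A => comp i j A ∉ 𝒜)).image (comp i j))

/-- A family is intersecting if any two members meet. -/
def IsIntersecting (𝒜 : Finset (Finset ℕ)) : Prop :=
  ∀ A ∈ 𝒜, ∀ B ∈ 𝒜, (A ∩ B).Nonempty

/-- A family is left-compressed if it is invariant under all ij-compressions, i < j. -/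
def LeftCompressed (𝒜 : Finset (Finset ℕ)) : Prop :=
  ∀ i j : ℕ, 1 ≤ i → i < j → compFam i j 𝒜 = 𝒜

/-- The compression order: same size and the k-th smallest element of `A` is at most
the k-th smallest element of `B`. -/
def domLE (A B : Finset ℕ) : Prop :=
  A.card = B.card ∧ ∀ (k : ℕ) (a b : ℕ), (A.sort (· ≤ ·))[k]? = some a →
    (B.sort (· ≤ ·))[k]? = some b → a ≤ b

/-- `A ≺ G` : `A` is generated by `G`, i.e. `|G| ≤ |A|` and the k-th smallest element
of `A` is at most the k-th smallest element of `G` for `k ≤ |G|`. -/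
def prec (A G : Finset ℕ) : Prop :=
  G.card ≤ A.card ∧ ∀ (k : ℕ) (a g : ℕ), (A.sort (· ≤ ·))[k]? = some a →
    (G.sort (· ≤ ·))[k]? = some g → a ≤ g

/-- The r-element subsets of [n] = {1, ..., n}. -/
def uniformOn (n r : ℕ) : Finset (Finset ℕ) := (Icc 1 n).powersetCard r

/-- The family ⟨𝒢⟩_r^n generated by 𝒢 under inclusion. -/
def genSub (r n : ℕ) (𝒢 : Finset (Finset ℕ)) : Finset (Finset ℕ) :=
  (uniformOn n r).filter (fun A => ∃ G ∈ 𝒢, G ⊆ A)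

open Classical in
/-- The family ⟨𝒢⟩_r^n generated by 𝒢 under ≺. -/
noncomputable def genP (r n : ℕ) (𝒢 : Finset (Finset ℕ)) : Finset (Finset ℕ) :=
  (uniformOn n r).filter (fun A => ∃ G ∈ 𝒢, prec A G)

/-- ℱ(X) : the members of ℱ meeting X. -/
def hitting (ℱ : Finset (Finset ℕ)) (X : Finset ℕ) : Finset (Finset ℕ) :=
  ℱ.filter (fun A => (A ∩ X).Nonempty)

/-- The star at 1 in [n]^(r). -/
def star (n r : ℕ) : Finset (Finset ℕ) := (uniformOn n r).filter (fun A => 1 ∈ A)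

/-- A maximal left-compressed intersecting subfamily of [n]^(r). -/
def MaxLCI (n r : ℕ) (𝒜 : Finset (Finset ℕ)) : Prop :=
  𝒜 ⊆ uniformOn n r ∧ LeftCompressed 𝒜 ∧ IsIntersecting 𝒜 ∧
    ∀ B ∈ uniformOn n r, B ∉ 𝒜 → ¬ IsIntersecting (insert B 𝒜)

/-- X is good for n and r. -/
def IsGood (n r : ℕ) (X : Finset ℕ) : Prop :=
  ∀ 𝒜 ⊆ uniformOn n r, LeftCompressed 𝒜 → IsIntersecting 𝒜 →
    (hitting 𝒜 X).card ≤ (hitting (star n r) X).card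

/-!
Every member of `ℬ` has two of the three points `1, 2, 3`, so `ℬ` is intersecting, and moving
elements leftwards can only add points of `{1, 2, 3}`, so `ℬ` is left-compressed. Sorting the
members of `ℬ({3, j})` and `𝒮({3, j})` by which of `1, 2, 3, j` they contain splits both into
families of `r`-sets containing a fixed set and avoiding another one; the extra family
`{A ∋ 1, 2, j, A ∌ 3}` of `ℬ({3, j})` is nonempty because `j ≥ r + 2`.
-/

lemma compFam_eq_self {i j : ℕ} {𝒜 : Finset (Finset ℕ)}
    (h : ∀ A ∈ 𝒜, comp i j A ∈ 𝒜) : compFam i j 𝒜 = 𝒜 := by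
  rw [compFam, filter_true_of_mem h, filter_false_of_mem fun A hA hc => hc (h A hA),
    image_empty, union_empty]

lemma comp_mem_uniformOn {n r i j : ℕ} {A : Finset ℕ} (hi : 1 ≤ i) (hij : i < j)
    (hA : A ∈ uniformOn n r) : comp i j A ∈ uniformOn n r := by
  unfold comp
  split_ifs with h
  · obtain ⟨hjA, hiA⟩ := h
    rw [uniformOn, mem_powersetCard] at hA ⊢
    have hjn : j ≤ n := (mem_Icc.1 (hA.1 hjA)).2
    refine ⟨insert_subset (mem_Icc.2 ⟨hi, by omega⟩) ((erase_subset _ _).trans hA.1), ?_⟩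
    rw [card_insert_of_notMem fun h => hiA (mem_of_mem_erase h), card_erase_of_mem hjA,
      hA.2, Nat.sub_add_cancel (hA.2 ▸ card_pos.2 ⟨j, hjA⟩)]
  · exact hA

lemma card_inter_le_card_comp_inter {i j : ℕ} {A I : Finset ℕ} (hI : j ∈ I → i ∈ I) :
    #(A ∩ I) ≤ #(comp i j A ∩ I) := by
  unfold comp
  split_ifs with h
  · obtain ⟨hjA, hiA⟩ := h
    by_cases hjI : j ∈ I
    · rw [insert_inter_of_mem (hI hjI), erase_inter, card_insert_of_notMem
          fun h => hiA (mem_inter.1 (mem_of_mem_erase h)).1,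
        card_erase_of_mem (mem_inter.2 ⟨hjA, hjI⟩),
        Nat.sub_add_cancel (card_pos.2 ⟨j, mem_inter.2 ⟨hjA, hjI⟩⟩)]
    · refine card_le_card fun x hx => ?_
      have hxj : x ≠ j := fun h => hjI (h ▸ (mem_inter.1 hx).2)
      simp_all
  · exact le_rfl

lemma leftCompressed_filter {n r : ℕ} {p : Finset ℕ → Prop} [DecidablePred p]
    (hp : ∀ i j A, 1 ≤ i → i < j → p A → p (comp i j A)) :
    LeftCompressed ((uniformOn n r).filter p) := by
  intro i j hi hij
  refine compFam_eq_self fun A hA => ?_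
  rw [mem_filter] at hA ⊢
  exact ⟨comp_mem_uniformOn hi hij hA.1, hp i j A hi hij hA.2⟩

lemma isIntersecting_filter_le_card_inter {t : ℕ} {I : Finset ℕ} (hI : #I < 2 * t)
    (𝒜 : Finset (Finset ℕ)) : IsIntersecting (𝒜.filter fun A => t ≤ #(A ∩ I)) := by
  intro A hA B hB
  rw [mem_filter] at hA hB
  obtain ⟨x, hx⟩ := inter_nonempty_of_card_lt_card_add_card inter_subset_right
    inter_subset_right (show #I < #(A ∩ I) + #(B ∩ I) by omega)
  simp only [mem_inter] at hx
  exact ⟨x, mem_inter.2 ⟨hx.1.1, hx.2.1⟩⟩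

section ContainingAvoiding

def containingAvoiding (n r : ℕ) (T U : Finset ℕ) : Finset (Finset ℕ) :=
  ((Icc 1 n \ U).powersetCard r).filter (T ⊆ ·)

variable {n r : ℕ} {T U : Finset ℕ}

lemma mem_containingAvoiding {A : Finset ℕ} :
    A ∈ containingAvoiding n r T U ↔ A ∈ uniformOn n r ∧ T ⊆ A ∧ Disjoint A U := by
  simp only [containingAvoiding, uniformOn, mem_filter, mem_powersetCard, subset_sdiff]
  tauto

lemma card_containingAvoiding (hU : U ⊆ Icc 1 n) (hT : T ⊆ Icc 1 n \ U) (hTr : #T ≤ r) :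
    #(containingAvoiding n r T U) = (n - #U - #T).choose (r - #T) := by
  rw [containingAvoiding, card_filter_powersetCard_subset _ _ _ hT hTr,
    card_sdiff_of_subset hU, Nat.card_Icc, Nat.add_sub_cancel]

lemma disjoint_containingAvoiding {T' U' : Finset ℕ} {x : ℕ} (hT : x ∈ T)
    (hU' : x ∈ U') : Disjoint (containingAvoiding n r T U) (containingAvoiding n r T' U') :=
  disjoint_left.2 fun _ hA hA' =>
    disjoint_left.1 (mem_containingAvoiding.1 hA').2.2 ((mem_containingAvoiding.1 hA).2.1 hT) hU'

end ContainingAvoiding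

lemma two_le_card_inter_one_two_three {A : Finset ℕ} :
    2 ≤ #(A ∩ {1, 2, 3}) ↔ 1 ∈ A ∧ 2 ∈ A ∨ 1 ∈ A ∧ 3 ∈ A ∨ 2 ∈ A ∧ 3 ∈ A := by
  rw [inter_comm, ← filter_mem_eq_inter]
  by_cases h1 : 1 ∈ A <;> by_cases h2 : 2 ∈ A <;> by_cases h3 : 3 ∈ A <;>
    simp [filter_insert, filter_singleton, h1, h2, h3]

lemma inter_pair_nonempty {A : Finset ℕ} {a b : ℕ} :
    (A ∩ {a, b}).Nonempty ↔ a ∈ A ∨ b ∈ A := by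
  simp [Finset.Nonempty, and_or_left, exists_or]

lemma hitting_two_of_three_eq {n r j : ℕ} (hj : 3 < j) :
    hitting ((uniformOn n r).filter fun A => 2 ≤ #(A ∩ {1, 2, 3})) {3, j} =
      containingAvoiding n r {1, 3} ∅ ∪ containingAvoiding n r {2, 3} {1} ∪
        containingAvoiding n r {1, 2, j} {3} := by
  ext A
  simp only [hitting, mem_filter, mem_union, mem_containingAvoiding, inter_pair_nonempty,
    two_le_card_inter_one_two_three, insert_subset_iff, singleton_subset_iff,
    disjoint_singleton_right, disjoint_empty_right, and_true]
  have : j ≠ 1 ∧ j ≠ 2 ∧ j ≠ 3 := by omega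
  grind

lemma hitting_star_eq {n r j : ℕ} (hj : 3 < j) :
    hitting (star n r) {3, j} =
      containingAvoiding n r {1, 3} ∅ ∪ containingAvoiding n r {1, j} {3} := by
  ext A
  simp only [hitting, _root_.star, mem_filter, mem_union, mem_containingAvoiding,
    inter_pair_nonempty, insert_subset_iff, singleton_subset_iff, disjoint_singleton_right,
    disjoint_empty_right, and_true]
  have : j ≠ 3 := by omega
  grind

lemma card_hitting_two_of_three {n r j : ℕ} (hr : 3 ≤ r) (hj : 3 < j) (hjn : j ≤ n) :
    #(hitting ((uniformOn n r).filter fun A => 2 ≤ #(A ∩ {1, 2, 3})) {3, j}) =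
      (n - 2).choose (r - 2) + (n - 3).choose (r - 2) + (n - 4).choose (r - 3) := by
  have h12j : #({1, 2, j} : Finset ℕ) = 3 := by
    rw [card_insert_of_notMem (by simp; omega), card_pair (by omega)]
  rw [hitting_two_of_three_eq hj,
    card_union_of_disjoint (disjoint_union_left.2 ⟨disjoint_containingAvoiding (x := 3) (by simp)
      (by simp), disjoint_containingAvoiding (x := 3) (by simp) (by simp)⟩),
    card_union_of_disjoint (disjoint_containingAvoiding (x := 1) (by simp) (by simp)),
    card_containingAvoiding (empty_subset _) (by simp [insert_subset_iff]; omega) (by simp; omega),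
    card_containingAvoiding (by simp; omega) (by simp [insert_subset_iff]; omega) (by simp; omega),
    card_containingAvoiding (by simp; omega) (by simp [insert_subset_iff]; omega) (by omega), h12j]
  simp [Nat.sub_sub]

lemma card_hitting_star {n r j : ℕ} (hr : 2 ≤ r) (hj : 3 < j) (hjn : j ≤ n) :
    #(hitting (star n r) {3, j}) = (n - 2).choose (r - 2) + (n - 3).choose (r - 2) := by
  rw [hitting_star_eq hj,
    card_union_of_disjoint (disjoint_containingAvoiding (x := 3) (by simp) (by simp)),
    card_containingAvoiding (empty_subset _) (by simp [insert_subset_iff]; omega) (by simp; omega),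
    card_containingAvoiding (by simp; omega) (by simp [insert_subset_iff]; omega)
      (by rw [card_pair (show 1 ≠ j by omega)]; omega), card_pair (show 1 ≠ j by omega)]
  simp [Nat.sub_sub]

theorem stmt15_general (n r j : ℕ) (hr : 3 ≤ r) (hj : r + 2 ≤ j)
    (hjn : j ≤ n) :
    (hitting ((uniformOn n r).filter (fun A => 2 ≤ (A ∩ {1, 2, 3}).card)) {3, j}).card =
      Nat.choose (n - 2) (r - 2) + Nat.choose (n - 3) (r - 2) + Nat.choose (n - 4) (r - 3) ∧
    (hitting (star n r) {3, j}).card = Nat.choose (n - 2) (r - 2) + Nat.choose (n - 3) (r - 2) ∧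
    (hitting (star n r) {3, j}).card <
      (hitting ((uniformOn n r).filter (fun A => 2 ≤ (A ∩ {1, 2, 3}).card)) {3, j}).card ∧
    ¬ IsGood n r {3, j} := by
  have hℬ := card_hitting_two_of_three hr (show 3 < j by omega) hjn
  have h𝒮 := card_hitting_star (show 2 ≤ r by omega) (show 3 < j by omega) hjn
  have hlt : #(hitting (star n r) {3, j}) <
      #(hitting ((uniformOn n r).filter fun A => 2 ≤ #(A ∩ {1, 2, 3})) {3, j}) := by
    rw [hℬ, h𝒮]
    have : 0 < (n - 4).choose (r - 3) := Nat.choose_pos (show r - 3 ≤ n - 4 by omega)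
    omega
  refine ⟨hℬ, h𝒮, hlt, fun hgood => hlt.not_ge ?_⟩
  refine hgood _ (filter_subset _ _) (leftCompressed_filter fun i k A hi hik hA => ?_)
    (isIntersecting_filter_le_card_inter (by simp) _)
  refine hA.trans (card_inter_le_card_comp_inter fun hk => ?_)
  simp only [mem_insert, mem_singleton] at hk ⊢
  omega

theorem stmt15 (n r j : ℕ) (hr : 3 ≤ r) (hn : 2 * r ≤ n) (hj : r + 2 ≤ j)
    (hjn : j ≤ n) :
    (hitting ((uniformOn n r).filter (fun A => 2 ≤ (A ∩ {1, 2, 3}).card)) {3, j}).card =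
      Nat.choose (n - 2) (r - 2) + Nat.choose (n - 3) (r - 2) + Nat.choose (n - 4) (r - 3) ∧
    (hitting (star n r) {3, j}).card = Nat.choose (n - 2) (r - 2) + Nat.choose (n - 3) (r - 2) ∧
    (hitting (star n r) {3, j}).card <
      (hitting ((uniformOn n r).filter (fun A => 2 ≤ (A ∩ {1, 2, 3}).card)) {3, j}).card ∧
    ¬ IsGood n r {3, j} :=
  stmt15_general n r j hr hj hjn
end

section
/- If X ⊆ [2,n] is good for n and r, and X ≤ X' (componentwise domination: |X| = |X'| and the i-th smallest element of X is at most that of X'), then X' is good for n and r. -/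
open Finset

/-!
Shifting a single element `x ∈ X` up to `y > x` (with `y ∉ X`) preserves goodness: for a
left-compressed `𝒜` the xy-compression injects `𝒜(X ∪ {y}) \ 𝒜(X ∪ {x})` into
`𝒜(X ∪ {x}) \ 𝒜(X ∪ {y})`, so `|𝒜(X ∪ {y})| ≤ |𝒜(X ∪ {x})|`, while the star is symmetric in
`x, y ≠ 1` and the yx-compression gives the reverse inequality for it. If `X ≤ X'`, then `X'` is
reached from `X` by such shifts: move the largest element of `X` to that of `X'`, then the second
largest, and so on; each target is then outside the current set.
-/

lemma card_comp (i j : ℕ) (A : Finset ℕ) : (comp i j A).card = A.card := by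
  unfold comp
  split_ifs with h
  · rw [card_insert_of_notMem fun hi => h.2 (mem_of_mem_erase hi), card_erase_add_one h.1]
  · rfl

lemma LeftCompressed.comp_mem {𝒜 : Finset (Finset ℕ)} (h𝒜 : LeftCompressed 𝒜) {i j : ℕ}
    (hi : 1 ≤ i) (hij : i < j) {A : Finset ℕ} (hA : A ∈ 𝒜) : comp i j A ∈ 𝒜 := by
  by_contra hnot
  have hmem : comp i j A ∈ compFam i j 𝒜 :=
    mem_union_right _ (mem_image_of_mem _ (mem_filter.mpr ⟨hA, hnot⟩))
  exact hnot (h𝒜 i j hi hij ▸ hmem)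

lemma comp_mem_star {n r x y : ℕ} (hx : x ≠ 1) (hy : y ∈ Icc 1 n) {A : Finset ℕ}
    (hA : A ∈ star n r) : comp y x A ∈ star n r := by
  simp only [_root_.star, uniformOn, mem_filter, mem_powersetCard] at hA ⊢
  obtain ⟨⟨hAn, hAr⟩, h1A⟩ := hA
  refine ⟨⟨?_, card_comp y x A ▸ hAr⟩, ?_⟩
  all_goals unfold comp; split_ifs
  · exact insert_subset hy ((erase_subset x A).trans hAn)
  · exact hAn
  · exact mem_insert_of_mem (mem_erase.mpr ⟨hx.symm, h1A⟩)
  · exact h1A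

lemma mem_hitting_insert_sdiff {ℱ : Finset (Finset ℕ)} {X A : Finset ℕ} {x y : ℕ} :
    A ∈ hitting ℱ (insert y X) \ hitting ℱ (insert x X) ↔
      A ∈ ℱ ∧ y ∈ A ∧ x ∉ A ∧ Disjoint A X := by
  simp only [hitting, mem_sdiff, mem_filter, ← not_disjoint_iff_nonempty_inter,
    disjoint_insert_right]
  tauto

lemma card_hitting_insert_le {ℱ : Finset (Finset ℕ)} {X : Finset ℕ} {x y : ℕ} (hx : x ∉ X)
    (hxy : x ≠ y) (hℱ : ∀ A ∈ ℱ, comp x y A ∈ ℱ) :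
    (hitting ℱ (insert y X)).card ≤ (hitting ℱ (insert x X)).card := by
  rw [← card_sdiff_le_card_sdiff_iff]
  refine card_le_card_of_injOn (comp x y) (fun A hA => ?_) (fun A hA B hB hAB => ?_)
  · obtain ⟨hAℱ, hyA, hxA, hAX⟩ := mem_hitting_insert_sdiff.mp hA
    have hcomp : comp x y A = insert x (A.erase y) := if_pos ⟨hyA, hxA⟩
    refine mem_hitting_insert_sdiff.mpr ⟨hℱ A hAℱ, ?_, ?_, ?_⟩ <;> rw [hcomp]
    · exact mem_insert_self x _
    · simp [hxy.symm]
    · exact disjoint_insert_left.mpr ⟨hx, disjoint_of_subset_left (erase_subset y A) hAX⟩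
  · obtain ⟨-, hyA, hxA, -⟩ := mem_hitting_insert_sdiff.mp hA
    obtain ⟨-, hyB, hxB, -⟩ := mem_hitting_insert_sdiff.mp hB
    have hAB' : insert x (A.erase y) = insert x (B.erase y) := by
      rwa [comp, comp, if_pos ⟨hyA, hxA⟩, if_pos ⟨hyB, hxB⟩] at hAB
    have herase : A.erase y = B.erase y := by
      simpa [erase_insert, hxA, hxB] using congrArg (·.erase x) hAB'
    rw [← insert_erase hyA, ← insert_erase hyB, herase]

lemma IsGood.insert_of_lt {n r x y : ℕ} {X : Finset ℕ} (hx : x ∉ X) (hy : y ∉ X) (hxy : x < y)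
    (hx2 : 2 ≤ x) (hyn : y ≤ n) (hgood : IsGood n r (insert x X)) : IsGood n r (insert y X) := by
  intro 𝒜 h𝒜n h𝒜 h𝒜int
  calc (hitting 𝒜 (insert y X)).card
      ≤ (hitting 𝒜 (insert x X)).card :=
        card_hitting_insert_le hx hxy.ne fun A hA => h𝒜.comp_mem (by omega) hxy hA
    _ ≤ (hitting (star n r) (insert x X)).card := hgood 𝒜 h𝒜n h𝒜 h𝒜int
    _ ≤ (hitting (star n r) (insert y X)).card :=
        card_hitting_insert_le hy hxy.ne' fun A hA =>
          comp_mem_star (by omega) (mem_Icc.mpr ⟨by omega, hyn⟩) hA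

lemma imp_of_forall₂_of_insert_lt (P : Finset ℕ → Prop) {lo hi : ℕ}
    (hP : ∀ X x y, x ∉ X → y ∉ X → x < y → lo ≤ x → y ≤ hi → P (insert x X) → P (insert y X))
    {a b : List ℕ} (hab : List.Forall₂ (· ≤ ·) a b)
    (ha : a.Pairwise (· < ·)) (hb : b.Pairwise (· < ·)) (hlo : ∀ z ∈ a, lo ≤ z)
    (hhi : ∀ z ∈ b, z ≤ hi) (S : Finset ℕ) (hS : ∀ s ∈ S, ∀ z ∈ a, s < z)
    (hSa : P (S ∪ a.toFinset)) : P (S ∪ b.toFinset) := by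
  induction hab generalizing S with
  | nil => exact hSa
  | @cons x y a b hxy _ ih =>
    rw [List.pairwise_cons] at ha hb
    simp only [List.forall_mem_cons] at hlo hhi hS
    simp only [List.toFinset_cons, union_insert, ← insert_union] at hSa ⊢
    have hxb : ∀ z ∈ b, x < z := fun z hz => hxy.trans_lt (hb.1 z hz)
    have hSb : P (insert x S ∪ b.toFinset) :=
      ih ha.2 hb.2 hlo.2 hhi.2 (insert x S)
        (by simpa [forall_mem_insert] using ⟨ha.1, fun s hs => (hS s hs).2⟩) hSa
    rcases hxy.eq_or_lt with rfl | hlt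
    · exact hSb
    rw [insert_union] at hSb ⊢
    refine hP _ x y ?_ ?_ hlt hlo.1 hhi.1 hSb
    · simp only [mem_union, List.mem_toFinset, not_or]
      exact ⟨fun hxS => (hS x hxS).1.false, fun hxb' => (hxb x hxb').false⟩
    · simp only [mem_union, List.mem_toFinset, not_or]
      exact ⟨fun hyS => ((hS y hyS).1.trans_le hxy).false, fun hyb => (hb.1 y hyb).false⟩

lemma domLE.imp_of_insert_lt {A B : Finset ℕ} (hAB : domLE A B) (P : Finset ℕ → Prop)
    {lo hi : ℕ}
    (hP : ∀ X x y, x ∉ X → y ∉ X → x < y → lo ≤ x → y ≤ hi → P (insert x X) → P (insert y X))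
    (hA : ∀ z ∈ A, lo ≤ z) (hB : ∀ z ∈ B, z ≤ hi) (hPA : P A) : P B := by
  have hsort : List.Forall₂ (· ≤ ·) (A.sort (· ≤ ·)) (B.sort (· ≤ ·)) := by
    refine List.forall₂_iff_get.mpr ⟨by simp [hAB.1], fun i hiA hiB => ?_⟩
    exact hAB.2 i _ _ (List.getElem?_eq_getElem hiA) (List.getElem?_eq_getElem hiB)
  simpa using imp_of_forall₂_of_insert_lt P hP hsort (sortedLT_sort A).pairwise
    (sortedLT_sort B).pairwise (by simpa using hA) (by simpa using hB) ∅ (by simp)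
    (by simpa using hPA)

theorem stmt16_general (n r : ℕ) (X Xp : Finset ℕ)
    (hX : X ⊆ Icc 2 n) (hXp : Xp ⊆ Icc 2 n) (hgood : IsGood n r X)
    (hle : domLE X Xp) : IsGood n r Xp :=
  hle.imp_of_insert_lt (IsGood n r)
    (fun _ _ _ => IsGood.insert_of_lt)
    (fun _ hz => (mem_Icc.mp (hX hz)).1) (fun _ hz => (mem_Icc.mp (hXp hz)).2) hgood

theorem stmt16 (n r : ℕ) (hr : 2 ≤ r) (hn : 2 * r ≤ n) (X Xp : Finset ℕ)
    (hX : X ⊆ Icc 2 n) (hXp : Xp ⊆ Icc 2 n) (hgood : IsGood n r X)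
    (hle : domLE X Xp) : IsGood n r Xp :=
  stmt16_general n r X Xp hX hXp hgood hle
end
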